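/- arXiv:1907.06576 — 5 statements merged into one kernel-verified Lean document; each statement's English description precedes it below -/
import Mathlib

section
/- For every finite tree T on n vertices (rooted, edges directed away from the root) and every natural number p with 1 ≤ p ≤ n, there exists a subtree T' of T rooted at some vertex such that p/2 ≤ |V(T')| ≤ p and removing the edges of T' from T (and then all isolated vertices) leaves a single connected tree. -/
/-!
Call `(T, u)` eligible if `T` is connected, `u ∈ T`, and `Tᶜ ∪ {u}` is connected. Among
eligible pairs with `p ≤ |T|` take one with `|T|` minimal. A component `C` of `T - u` contains a
neighbour `b` of `u`, and `(C, b)` is again eligible, so by minimality every such component has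
fewer than `p` vertices. If `p < |T|`, a union `W` of components as large as possible subject to
`|W| < p` then satisfies `p ≤ 2|W|` (otherwise one more component would fit, or a single
component would beat `W`), and `(W ∪ {u}, u)` is the required pair.
-/

open Set

namespace SimpleGraph

variable {V : Type*} {G : SimpleGraph V}

/-- `W` is a union of connected components of `G.induce A`. -/
structure AdjClosedIn (G : SimpleGraph V) (A W : Set V) : Prop where
  subset : W ⊆ A
  mem_of_adj ⦃x y : V⦄ : x ∈ W → y ∈ A → G.Adj x y → y ∈ W

namespace AdjClosedIn

variable {A B W W' : Set V}

lemma empty : G.AdjClosedIn A ∅ :=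
  ⟨empty_subset A, fun _ _ hx => hx.elim⟩

lemma diff (h : G.AdjClosedIn A W) : G.AdjClosedIn A (A \ W) :=
  ⟨sdiff_subset, fun _ _ hx hy hxy =>
    ⟨hy, fun hyW => hx.2 (h.mem_of_adj hyW hx.1 hxy.symm)⟩⟩

lemma union (h : G.AdjClosedIn A W) (h' : G.AdjClosedIn A W') : G.AdjClosedIn A (W ∪ W') :=
  ⟨union_subset h.subset h'.subset, fun _ _ hx hy hxy =>
    hx.imp (fun hx => h.mem_of_adj hx hy hxy) (fun hx => h'.mem_of_adj hx hy hxy)⟩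

lemma trans (hB : G.AdjClosedIn A B) (hW : G.AdjClosedIn B W) : G.AdjClosedIn A W :=
  ⟨hW.subset.trans hB.subset, fun _ _ hx hy hxy =>
    hW.mem_of_adj hx (hB.mem_of_adj (hW.subset hx) hy hxy) hxy⟩

end AdjClosedIn

lemma induce_singleton_connected (v : V) : (G.induce {v}).Connected := by
  rw [induce_singleton_eq_top]
  exact connected_top

lemma Connected.eq_of_adjClosedIn {T S : Set V} (hT : (G.induce T).Connected)
    (hS : G.AdjClosedIn T S) (hne : S.Nonempty) : S = T := by
  refine hS.subset.antisymm fun t ht => ?_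
  obtain ⟨s, hs⟩ := hne
  by_contra htS
  obtain ⟨w⟩ := hT.preconnected ⟨s, hS.subset hs⟩ ⟨t, ht⟩
  obtain ⟨d, -, hd₁, hd₂⟩ := w.exists_boundary_dart (Subtype.val ⁻¹' S) hs htS
  exact hd₂ (hS.mem_of_adj hd₁ d.snd.2 d.adj)

lemma exists_connected_adjClosedIn [Finite V] {A : Set V} {y : V} (hy : y ∈ A) :
    ∃ C, y ∈ C ∧ (G.induce C).Connected ∧ G.AdjClosedIn A C := by
  obtain ⟨C, ⟨hyC, hCA, hC⟩, hmax⟩ :=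
    (toFinite {C | y ∈ C ∧ C ⊆ A ∧ (G.induce C).Connected}).exists_maximal
      ⟨{y}, rfl, singleton_subset_iff.mpr hy, induce_singleton_connected y⟩
  refine ⟨C, hyC, hC, hCA, fun x z hx hz hxz => ?_⟩
  have hCz : (G.induce (C ∪ {z})).Connected :=
    connected_induce_union hC.preconnected (induce_singleton_connected z).preconnected hx rfl hxz
  exact hmax ⟨Or.inl hyC, union_subset hCA (singleton_subset_iff.mpr hz), hCz⟩
    subset_union_left (Or.inr rfl)

lemma exists_adj_of_adjClosedIn {T W : Set V} {u : V} (hT : (G.induce T).Connected)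
    (hu : u ∈ T) (hW : G.AdjClosedIn (T \ {u}) W) (hne : W.Nonempty) :
    ∃ b ∈ W, G.Adj u b := by
  by_contra! hno
  have hWT : G.AdjClosedIn T W := by
    refine ⟨hW.subset.trans sdiff_subset,
      fun x z hx hz hxz => hW.mem_of_adj hx ⟨hz, ?_⟩ hxz⟩
    rintro rfl
    exact hno x hx hxz.symm
  exact (hW.subset (hT.eq_of_adjClosedIn hWT hne ▸ hu)).2 rfl

lemma connected_insert_of_adjClosedIn [Finite V] {T W : Set V} {u : V}
    (hT : (G.induce T).Connected) (hu : u ∈ T) (hW : G.AdjClosedIn (T \ {u}) W) :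
    (G.induce (insert u W)).Connected := by
  refine induce_connected_of_patches u (mem_insert u W) fun {v} hv => ?_
  rcases hv with rfl | hv
  · exact ⟨{v}, singleton_subset_iff.mpr (mem_insert v W), rfl, rfl, Reachable.refl _⟩
  obtain ⟨C, hvC, hC, hCW⟩ := G.exists_connected_adjClosedIn hv
  obtain ⟨b, hbC, hub⟩ := exists_adj_of_adjClosedIn hT hu (hW.trans hCW) ⟨v, hvC⟩
  have huC : (G.induce ({u} ∪ C)).Connected :=
    connected_induce_union (induce_singleton_connected u).preconnected hC.preconnected rfl hbC hub
  exact ⟨{u} ∪ C, union_subset (singleton_subset_iff.mpr (mem_insert u W))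
    (hCW.subset.trans (subset_insert u W)), Or.inl rfl, Or.inr hvC, huC.preconnected _ _⟩

lemma exists_adjClosedIn_ncard [Finite V] {A : Set V} {p : ℕ} (hp : 0 < p) (hA : p ≤ A.ncard)
    (hsmall : ∀ C, G.AdjClosedIn A C → (G.induce C).Connected → C.ncard < p) :
    ∃ W, G.AdjClosedIn A W ∧ W.ncard < p ∧ p ≤ 2 * W.ncard := by
  obtain ⟨W, ⟨hW, hWp⟩, hmax⟩ :=
    (toFinite {W | G.AdjClosedIn A W ∧ W.ncard < p}).exists_maximalFor ncard _
      ⟨∅, AdjClosedIn.empty, by rwa [ncard_empty]⟩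
  refine ⟨W, hW, hWp, ?_⟩
  obtain ⟨y, hyA, hyW⟩ :=
    not_subset.mp fun hAW : A ⊆ W => (ncard_le_ncard hAW).not_gt (by omega)
  obtain ⟨C, hyC, hC, hCW⟩ := G.exists_connected_adjClosedIn (A := A \ W) ⟨hyA, hyW⟩
  have hCA : G.AdjClosedIn A C := hW.diff.trans hCW
  have hCp := hsmall C hCA hC
  have hCleW : C.ncard ≤ W.ncard := by
    by_contra! hlt
    exact hlt.not_ge (hmax ⟨hCA, hCp⟩ hlt.le)
  have hdisj : Disjoint W C := Set.disjoint_left.mpr fun _ hxW hxC => (hCW.subset hxC).2 hxW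
  have hWC : (W ∪ C).ncard = W.ncard + C.ncard := ncard_union_eq hdisj
  have hC_pos : 0 < C.ncard := (ncard_pos (toFinite C)).mpr ⟨y, hyC⟩
  have hpWC : p ≤ W.ncard + C.ncard := by
    by_contra! hlt
    have := hmax ⟨hW.union hCA, hWC ▸ hlt⟩ (by omega)
    omega
  omega

structure IsEligible (G : SimpleGraph V) (S : Set V) (r : V) : Prop where
  root_mem : r ∈ S
  connected : (G.induce S).Connected
  connected_compl : (G.induce (Sᶜ ∪ {r})).Connected

lemma Connected.isEligible_univ (hG : G.Connected) (v : V) : G.IsEligible univ v := by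
  refine ⟨mem_univ v, (induceUnivIso G).connected_iff.mpr hG, ?_⟩
  rw [compl_univ, empty_union]
  exact induce_singleton_connected v

namespace IsEligible

variable {T W : Set V} {u : V}

lemma insert_of_adjClosedIn [Finite V] (h : G.IsEligible T u)
    (hW : G.AdjClosedIn (T \ {u}) W) : G.IsEligible (insert u W) u := by
  refine ⟨mem_insert u W, connected_insert_of_adjClosedIn h.connected h.root_mem hW, ?_⟩
  have hset : (insert u W)ᶜ ∪ {u} = (Tᶜ ∪ {u}) ∪ insert u ((T \ {u}) \ W) := by
    ext z
    have hWT : z ∈ W → z ∈ T \ {u} := fun hz => hW.subset hz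
    simp only [mem_union, mem_compl_iff, mem_insert_iff, mem_singleton_iff, mem_sdiff] at hWT ⊢
    tauto
  rw [hset]
  exact induce_union_connected h.connected_compl.preconnected
    (connected_insert_of_adjClosedIn h.connected h.root_mem hW.diff).preconnected
    ⟨u, Or.inr rfl, mem_insert u _⟩

lemma exists_of_adjClosedIn [Finite V] (h : G.IsEligible T u) (hW : G.AdjClosedIn (T \ {u}) W)
    (hWconn : (G.induce W).Connected) : ∃ b, G.IsEligible W b := by
  obtain ⟨b, hbW, hub⟩ := exists_adj_of_adjClosedIn h.connected h.root_mem hW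
    (nonempty_coe_sort.mp hWconn.nonempty)
  have huW : u ∉ W := fun huW => (hW.subset huW).2 rfl
  have hcompl := (h.insert_of_adjClosedIn hW).connected_compl
  have hset : (insert u W)ᶜ ∪ {u} = Wᶜ := by
    ext z
    by_cases hz : z = u <;> simp [hz, huW]
  rw [hset] at hcompl
  exact ⟨b, hbW, hWconn, connected_induce_union hcompl.preconnected
    (induce_singleton_connected b).preconnected huW rfl hub⟩

end IsEligible

theorem Connected.exists_isEligible_ncard [Finite V] (hG : G.Connected) {p : ℕ} (hp : 0 < p)
    (hpn : p ≤ Nat.card V) :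
    ∃ S r, G.IsEligible S r ∧ p ≤ 2 * S.ncard ∧ S.ncard ≤ p := by
  obtain ⟨v⟩ := hG.nonempty
  obtain ⟨⟨T, u⟩, ⟨hTu : G.IsEligible T u, hpT : p ≤ T.ncard⟩, hmin⟩ :=
    exists_minimalFor_of_wellFoundedLT
      (fun Tu : Set V × V => G.IsEligible Tu.1 Tu.2 ∧ p ≤ Tu.1.ncard) (fun Tu => Tu.1.ncard)
      ⟨(univ, v), hG.isEligible_univ v, by rwa [ncard_univ]⟩
  by_cases hTp : T.ncard ≤ p
  · exact ⟨T, u, hTu, by omega, hTp⟩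
  have hsmall : ∀ C, G.AdjClosedIn (T \ {u}) C → (G.induce C).Connected → C.ncard < p := by
    intro C hC hCconn
    by_contra! hpC
    obtain ⟨b, hb⟩ := hTu.exists_of_adjClosedIn hC hCconn
    have hCT : C.ncard < T.ncard :=
      ncard_lt_ncard (hC.subset.trans_ssubset (sdiff_singleton_ssubset.mpr hTu.root_mem))
    exact hCT.not_ge (hmin (j := (C, b)) ⟨hb, hpC⟩ hCT.le)
  have hA : p ≤ (T \ {u}).ncard := by
    rw [ncard_sdiff_singleton_of_mem hTu.root_mem]
    omega
  obtain ⟨W, hW, hWp, hpW⟩ := exists_adjClosedIn_ncard hp hA hsmall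
  have hWu : u ∉ W := fun h => (hW.subset h).2 rfl
  refine ⟨insert u W, u, hTu.insert_of_adjClosedIn hW, ?_, ?_⟩ <;>
    rw [ncard_insert_of_notMem hWu] <;> omega

end SimpleGraph

/-- Eligible subtree lemma: any finite tree `G` on `n` vertices and any `1 ≤ p ≤ n`
admits a rooted subtree `S` with `p/2 ≤ |S| ≤ p` whose removal (keeping the root `r`)
leaves a single connected tree. -/
theorem stmt_0 {V : Type*} [Fintype V] (G : SimpleGraph V) (hT : G.IsTree)
    (p : ℕ) (hp1 : 1 ≤ p) (hpn : p ≤ Fintype.card V) :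
    ∃ (S : Set V) (r : V), r ∈ S ∧ (G.induce S).Connected ∧
      (G.induce (Sᶜ ∪ {r})).Connected ∧
      p ≤ 2 * S.ncard ∧ S.ncard ≤ p := by
  obtain ⟨S, r, ⟨hr, hS, hSc⟩, hcard⟩ :=
    hT.connected.exists_isEligible_ncard hp1 (by rwa [Nat.card_eq_fintype_card])
  exact ⟨S, r, hr, hS, hSc, hcard⟩
end

section
/- Let OPT ≥ 0 and k ≥ 1, and let (g_i) be a sequence of reals with g_0 = 0 satisfying g_{i+1} − g_i ≥ (OPT − g_i)/k for all i ≥ 0. Then for every i, g_i ≥ (1 − (1 − 1/k)^i)·OPT. -/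
theorem sub_le_pow_mul_sub_of_div_le_sub {c : ℝ} {k : ℕ} {g : ℕ → ℝ}
    (hstep : ∀ n, (c - g n) / k ≤ g (n + 1) - g n) (n : ℕ) :
    c - g n ≤ (1 - 1 / (k : ℝ)) ^ n * (c - g 0) := by
  -- for `k = 0` the ratio is `1`, since `1 / (0 : ℝ) = 0`
  have hr : 0 ≤ 1 - 1 / (k : ℝ) := sub_nonneg.2 (by simpa using Nat.cast_inv_le_one (α := ℝ) k)
  refine le_geom (u := fun m => c - g m) hr n fun m _ => ?_
  have hm := hstep m
  rw [div_eq_mul_one_div] at hm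
  linarith

theorem stmt_2_general (OPT : ℝ) (k : ℕ)
    (g : ℕ → ℝ) (hg0 : g 0 = 0)
    (hrec : ∀ i : ℕ, g (i + 1) - g i ≥ (OPT - g i) / k) :
    ∀ i : ℕ, g i ≥ (1 - (1 - 1 / (k : ℝ)) ^ i) * OPT := by
  intro i
  have gap := sub_le_pow_mul_sub_of_div_le_sub hrec i
  rw [hg0, sub_zero] at gap
  linarith

theorem stmt_2 (OPT : ℝ) (hOPT : 0 ≤ OPT) (k : ℕ) (hk : 1 ≤ k)
    (g : ℕ → ℝ) (hg0 : g 0 = 0)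
    (hrec : ∀ i : ℕ, g (i + 1) - g i ≥ (OPT - g i) / k) :
    ∀ i : ℕ, g i ≥ (1 - (1 - 1 / (k : ℝ)) ^ i) * OPT :=
  stmt_2_general OPT k g hg0 hrec
end

section
/- In the graph G constructed from a set system S = {S_1,…,S_m} over elements {x_1,…,x_n} by taking a clique on vertices s_1,…,s_m, q copies x_{j,1},…,x_{j,q} of each element x_j, and edges (s_i, x_{j,z}) whenever x_j ∈ S_i: if some k sets of S cover at least λ elements, then there exists a connected set C of at most k vertices of G with |N[C]| ≥ m + qλ. -/
/-!
Take `C` to be the set-vertices `s_i` of the covering subfamily `K`. They form a clique, hence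
a connected set; any one of them dominates every `s_i`, and every copy of every element covered
by `K` is adjacent to some vertex of `C`. So `N[C]` contains `m + q · |⋃ K|` vertices.
-/

/-- The closed neighborhood `N[S]` of a set of vertices. -/
def closedNbhd {V : Type*} (G : SimpleGraph V) (S : Set V) : Set V :=
  {u | ∃ v ∈ S, u = v ∨ G.Adj v u}

/-- The graph of the BCDS gap reduction: a clique on set-vertices `s_1, …, s_m`,
`q` copies of each of the `n` elements, and copy `x_{j,z}` adjacent to `s_i`
exactly when `x_j ∈ S_i`. -/
def MCGraph (m n q : ℕ) (Sets : Fin m → Finset (Fin n)) :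
    SimpleGraph (Sum (Fin m) (Fin n × Fin q)) where
  Adj a b := match a, b with
    | .inl i, .inl j => i ≠ j
    | .inl i, .inr x => x.1 ∈ Sets i
    | .inr x, .inl i => x.1 ∈ Sets i
    | .inr _, .inr _ => False
  symm := ⟨by rintro (i | x) (j | y) h <;> simp_all <;> first | exact fun h2 => h h2.symm | exact Ne.symm h | tauto⟩
  loopless := ⟨by rintro (i | x) h <;> simp_all⟩

open Finset

lemma SimpleGraph.IsClique.connected_induce {V : Type*} {G : SimpleGraph V} {s : Set V}
    (hs : G.IsClique s) (hne : s.Nonempty) : (G.induce s).Connected := by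
  have : Nonempty s := hne.to_subtype
  refine (SimpleGraph.connected_iff _).2 ⟨fun u v ↦ ?_, inferInstance⟩
  by_cases huv : u = v
  · rw [huv]
  · exact SimpleGraph.Adj.reachable (hs u.2 v.2 (Subtype.coe_ne_coe.2 huv))

namespace MCGraph

variable {m n q : ℕ} {Sets : Fin m → Finset (Fin n)}

@[simp]
lemma adj_inl_inl {i j : Fin m} : (MCGraph m n q Sets).Adj (.inl i) (.inl j) ↔ i ≠ j :=
  Iff.rfl

@[simp]
lemma adj_inl_inr {i : Fin m} {x : Fin n × Fin q} :
    (MCGraph m n q Sets).Adj (.inl i) (.inr x) ↔ x.1 ∈ Sets i :=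
  Iff.rfl

lemma isClique_image_inl (K : Set (Fin m)) :
    (MCGraph m n q Sets).IsClique (Sum.inl '' K) := by
  rintro _ ⟨i, -, rfl⟩ _ ⟨j, -, rfl⟩ hij
  exact adj_inl_inl.2 fun h ↦ hij (congrArg Sum.inl h)

lemma disjSum_subset_closedNbhd {K : Finset (Fin m)} (hK : K.Nonempty) :
    ↑((univ : Finset (Fin m)).disjSum (K.biUnion Sets ×ˢ (univ : Finset (Fin q)))) ⊆
      closedNbhd (MCGraph m n q Sets) (Sum.inl '' K) := by
  obtain ⟨i₀, hi₀⟩ := hK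
  rintro (i | x) hu
  · refine ⟨.inl i₀, ⟨i₀, hi₀, rfl⟩, ?_⟩
    by_cases h : i = i₀
    · exact .inl (by rw [h])
    · exact .inr (adj_inl_inl.2 (Ne.symm h))
  · obtain ⟨i, hi, hx⟩ := mem_biUnion.1 (mem_product.1 (inr_mem_disjSum.1 hu)).1
    exact ⟨.inl i, ⟨i, hi, rfl⟩, .inr (adj_inl_inr.2 hx)⟩

lemma card_le_ncard_closedNbhd {K : Finset (Fin m)} (hK : K.Nonempty) :
    m + (K.biUnion Sets).card * q ≤ (closedNbhd (MCGraph m n q Sets) (Sum.inl '' K)).ncard := by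
  calc m + (K.biUnion Sets).card * q
      = ((univ : Finset (Fin m)).disjSum (K.biUnion Sets ×ˢ (univ : Finset (Fin q)))).card := by
        simp only [card_disjSum, card_product, card_univ, Fintype.card_fin]
    _ ≤ _ := by
        rw [← Set.ncard_coe_finset]
        exact Set.ncard_le_ncard (disjSum_subset_closedNbhd hK) (Set.toFinite _)

end MCGraph

theorem stmt_13_general (m n q k lam : ℕ) (hl : 1 ≤ lam)
    (Sets : Fin m → Finset (Fin n))
    (K : Finset (Fin m)) (hK : K.card ≤ k) (hcov : lam ≤ (K.biUnion Sets).card) :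
    ∃ C : Set (Sum (Fin m) (Fin n × Fin q)), C.ncard ≤ k ∧
      ((MCGraph m n q Sets).induce C).Connected ∧
      m + q * lam ≤ (closedNbhd (MCGraph m n q Sets) C).ncard := by
  have hKne : K.Nonempty := by
    obtain ⟨i, hi, -⟩ := biUnion_nonempty.1 (card_pos.1 (hl.trans hcov))
    exact ⟨i, hi⟩
  refine ⟨Sum.inl '' K, ?_, ?_, ?_⟩
  · rw [Set.ncard_image_of_injective _ Sum.inl_injective, Set.ncard_coe_finset]
    exact hK
  · exact (MCGraph.isClique_image_inl _).connected_induce (hKne.to_set.image _)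
  · calc m + q * lam ≤ m + (K.biUnion Sets).card * q := by
          rw [mul_comm]; gcongr
      _ ≤ _ := MCGraph.card_le_ncard_closedNbhd hKne

/-- If some `k` sets of the system cover at least `λ` elements, then the reduction
graph has a connected set `C` of at most `k` vertices dominating at least `m + qλ`
vertices. -/
theorem stmt_13 (m n q k lam : ℕ) (hm : 1 ≤ m) (hq : 1 ≤ q) (hk : 1 ≤ k) (hl : 1 ≤ lam)
    (Sets : Fin m → Finset (Fin n))
    (K : Finset (Fin m)) (hK : K.card ≤ k) (hcov : lam ≤ (K.biUnion Sets).card) :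
    ∃ C : Set (Sum (Fin m) (Fin n × Fin q)), C.ncard ≤ k ∧
      ((MCGraph m n q Sets).induce C).Connected ∧
      m + q * lam ≤ (closedNbhd (MCGraph m n q Sets) C).ncard :=
  stmt_13_general m n q k lam hl Sets K hK hcov
end

section
/- In the graph G of the BEVD gap reduction (root v_0 adjacent to s_1,…,s_m; q copies of each element x_j, each adjacent to the s_i with x_j ∈ S_i): for every edge set E' of size at most k, there is an edge set E'' of size at most k consisting only of edges of the form (v_0, s_i) with N[E'] ⊆ N[E'']. -/
/-- The set of endpoints `V(E')` of a set of edges. -/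
def endpoints {V : Type*} (E' : Set (Sym2 V)) : Set V :=
  {v | ∃ e ∈ E', v ∈ e}

/-- The graph of the BEVD gap reduction: a root `v₀` adjacent to set-vertices
`s_1, …, s_m`, and `q` copies of each of the `n` elements, with copy `x_{j,z}`
adjacent to `s_i` exactly when `x_j ∈ S_i`. -/
def BEVDGraph (m n q : ℕ) (Sets : Fin m → Finset (Fin n)) :
    SimpleGraph (Sum Unit (Sum (Fin m) (Fin n × Fin q))) where
  Adj a b := match a, b with
    | .inl _, .inr (.inl _) => True
    | .inr (.inl _), .inl _ => True
    | .inr (.inl i), .inr (.inr x) => x.1 ∈ Sets i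
    | .inr (.inr x), .inr (.inl i) => x.1 ∈ Sets i
    | _, _ => False
  symm := ⟨by rintro (u | i | x) (v | j | y) h <;> simp_all⟩
  loopless := ⟨by rintro (u | i | x) h <;> simp_all⟩

/-!
The set-vertices `s_i` form a vertex cover, and every neighbour of a neighbour of some `s_i`
is itself a set-vertex, hence adjacent to `v₀`. So an edge `(s_i, y)` dominates nothing that
`(v₀, s_i)` does not, and replacing each edge of `E'` by such a root edge proves the claim.
-/

namespace SimpleGraph

variable {V : Type*} (G : SimpleGraph V)

theorem closedNbhd_endpoints_subset {E' E'' : Set (Sym2 V)}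
    (h : ∀ e ∈ E', ∃ e'' ∈ E'', closedNbhd G {v | v ∈ e} ⊆ closedNbhd G {v | v ∈ e''}) :
    closedNbhd G (endpoints E') ⊆ closedNbhd G (endpoints E'') := by
  rintro u ⟨v, ⟨e, he, hve⟩, hvu⟩
  obtain ⟨e'', he'', hsub⟩ := h e he
  obtain ⟨w, hw, hwu⟩ := hsub ⟨v, hve, hvu⟩
  exact ⟨w, ⟨e'', he'', hw⟩, hwu⟩

variable {G}

theorem closedNbhd_edge_subset {r c y : V} (hcy : G.Adj c y)
    (hy : ∀ u, G.Adj y u → G.Adj r u) :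
    closedNbhd G {v | v ∈ s(c, y)} ⊆ closedNbhd G {v | v ∈ s(r, c)} := by
  rintro u ⟨v, hv, hvu⟩
  rcases Sym2.mem_iff.mp hv with rfl | rfl
  · exact ⟨v, Sym2.mem_mk_right r v, hvu⟩
  · rcases hvu with rfl | hvu
    · exact ⟨c, Sym2.mem_mk_right r c, Or.inr hcy⟩
    · exact ⟨r, Sym2.mem_mk_left r c, Or.inr (hy u hvu)⟩

end SimpleGraph

namespace BEVDGraph

variable {m n q : ℕ} {Sets : Fin m → Finset (Fin n)}

theorem exists_setVertex_mem {e : Sym2 (Sum Unit (Sum (Fin m) (Fin n × Fin q)))}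
    (he : e ∈ (BEVDGraph m n q Sets).edgeSet) : ∃ i, Sum.inr (Sum.inl i) ∈ e := by
  induction e using Sym2.ind with
  | _ a b =>
    rcases a with _ | i | _ <;> rcases b with _ | j | _ <;>
      first
      | exact ⟨i, Sym2.mem_mk_left _ _⟩
      | exact ⟨j, Sym2.mem_mk_right _ _⟩
      | simp [BEVDGraph] at he

theorem adj_root_of_adj_of_adj {i : Fin m} {y u : Sum Unit (Sum (Fin m) (Fin n × Fin q))}
    (hy : (BEVDGraph m n q Sets).Adj (Sum.inr (Sum.inl i)) y)
    (hu : (BEVDGraph m n q Sets).Adj y u) :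
    (BEVDGraph m n q Sets).Adj (Sum.inl ()) u := by
  rcases y with _ | _ | _ <;> rcases u with _ | _ | _ <;> simp_all [BEVDGraph]

theorem exists_rootEdge_closedNbhd_subset {e : Sym2 (Sum Unit (Sum (Fin m) (Fin n × Fin q)))}
    (he : e ∈ (BEVDGraph m n q Sets).edgeSet) :
    ∃ i, closedNbhd (BEVDGraph m n q Sets) {v | v ∈ e}
      ⊆ closedNbhd (BEVDGraph m n q Sets) {v | v ∈ s(Sum.inl (), Sum.inr (Sum.inl i))} := by
  obtain ⟨i, hi⟩ := exists_setVertex_mem he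
  obtain ⟨y, rfl⟩ := Sym2.mem_iff_exists.mp hi
  exact ⟨i, SimpleGraph.closedNbhd_edge_subset he fun _ => adj_root_of_adj_of_adj he⟩

end BEVDGraph

theorem stmt_16_general (m n q k : ℕ)
    (Sets : Fin m → Finset (Fin n)) :
    ∀ E' ⊆ (BEVDGraph m n q Sets).edgeSet, E'.ncard ≤ k →
      ∃ E'' ⊆ (BEVDGraph m n q Sets).edgeSet, E''.ncard ≤ k ∧
        (∀ e ∈ E'', ∃ i : Fin m,
          e = s(Sum.inl (), Sum.inr (Sum.inl i))) ∧
        closedNbhd (BEVDGraph m n q Sets) (endpoints E')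
          ⊆ closedNbhd (BEVDGraph m n q Sets) (endpoints E'') := by
  intro E' hE' hk
  set G := BEVDGraph m n q Sets
  set rootEdges := Set.range fun i : Fin m => s(Sum.inl (), Sum.inr (Sum.inl i))
  have dominated : ∀ e ∈ E', ∃ e'' ∈ rootEdges,
      closedNbhd G {v | v ∈ e} ⊆ closedNbhd G {v | v ∈ e''} := fun e he =>
    let ⟨i, hi⟩ := BEVDGraph.exists_rootEdge_closedNbhd_subset (hE' he)
    ⟨_, ⟨i, rfl⟩, hi⟩
  choose! root hroot hdom using dominated
  refine ⟨root '' E', ?_, (Set.ncard_image_le E'.toFinite).trans hk, ?_,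
    G.closedNbhd_endpoints_subset fun e he => ⟨root e, ⟨e, he, rfl⟩, hdom e he⟩⟩
  · rintro _ ⟨e, he, rfl⟩
    obtain ⟨i, hi⟩ := hroot e he
    rw [← hi]
    trivial
  · rintro _ ⟨e, he, rfl⟩
    obtain ⟨i, hi⟩ := hroot e he
    exact ⟨i, hi.symm⟩

/-- In the BEVD reduction graph, any edge set of size at most `k` can be replaced by an
edge set of size at most `k` consisting only of root edges `(v₀, s_i)` that dominates at
least as much. -/
theorem stmt_16 (m n q k : ℕ) (hm : 1 ≤ m) (hq : 1 ≤ q)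
    (Sets : Fin m → Finset (Fin n)) :
    ∀ E' ⊆ (BEVDGraph m n q Sets).edgeSet, E'.ncard ≤ k →
      ∃ E'' ⊆ (BEVDGraph m n q Sets).edgeSet, E''.ncard ≤ k ∧
        (∀ e ∈ E'', ∃ i : Fin m,
          e = s(Sum.inl (), Sum.inr (Sum.inl i))) ∧
        closedNbhd (BEVDGraph m n q Sets) (endpoints E')
          ⊆ closedNbhd (BEVDGraph m n q Sets) (endpoints E'') :=
  stmt_16_general m n q k Sets
end

section
/- In the BEVD gap-reduction graph, if some k sets cover at least λ elements, then there is a set of at most k edges dominating at least m + 1 + qλ vertices; conversely, if every k sets cover fewer than μ elements, then every set of at most k edges dominates fewer than m + 1 + qμ vertices. -/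
/-!
Taking the edges `v₀ s_i` for `i ∈ K` dominates the root, every set-vertex and all `q` copies of
each element of `⋃ K`, which gives `m + 1 + q |⋃ K|` vertices. Conversely, the set-vertices form an
independent set, so a set `E'` of edges touches at most `|E'|` of them; and a copy of `x_j` can
only be dominated by an endpoint `s_i` with `x_j ∈ S_i`. Hence `N[V(E')]` lies inside the root,
the set-vertices and the copies of the elements covered by the touched sets.
-/

section Endpoints

variable {V : Type*} {G : SimpleGraph V} {E' : Set (Sym2 V)}

theorem exists_adj_of_mem_endpoints (hE : E' ⊆ G.edgeSet) {u : V} (hu : u ∈ endpoints E') :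
    ∃ v ∈ endpoints E', G.Adj v u := by
  obtain ⟨e, he, hue⟩ := hu
  have hadj : G.Adj u (Sym2.Mem.other hue) := by
    rw [← SimpleGraph.mem_edgeSet, Sym2.other_spec hue]
    exact hE he
  exact ⟨_, ⟨e, he, Sym2.other_mem hue⟩, hadj.symm⟩

theorem mem_closedNbhd_endpoints_iff (hE : E' ⊆ G.edgeSet) {u : V} :
    u ∈ closedNbhd G (endpoints E') ↔ ∃ v ∈ endpoints E', G.Adj v u := by
  refine ⟨?_, fun ⟨v, hv, hvu⟩ => ⟨v, hv, .inr hvu⟩⟩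
  rintro ⟨v, hv, rfl | hvu⟩
  · exact exists_adj_of_mem_endpoints hE hv
  · exact ⟨v, hv, hvu⟩

/-- An edge contains at most one vertex of an independent family. -/
theorem ncard_setOf_mem_endpoints_le {ι : Type*} {f : ι → V} (hf : Function.Injective f)
    (hind : ∀ i j, ¬ G.Adj (f i) (f j)) (hE : E' ⊆ G.edgeSet) (hfin : E'.Finite) :
    {i | f i ∈ endpoints E'}.ncard ≤ E'.ncard := by
  obtain hempty | ⟨i₀, -⟩ := {i | f i ∈ endpoints E'}.eq_empty_or_nonempty
  · simp [hempty]
  have : Nonempty (Sym2 V) := ⟨s(f i₀, f i₀)⟩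
  choose! e he hfe using fun i (hi : f i ∈ endpoints E') => hi
  refine Set.ncard_le_ncard_of_injOn e he (fun i hi j hj hij => ?_) hfin
  by_contra hne
  have hedge : e i = s(f i, f j) :=
    (Sym2.mem_and_mem_iff (hf.ne hne)).1 ⟨hfe i hi, hij ▸ hfe j hj⟩
  exact hind i j (by simpa [hedge] using hE (he i hi))

end Endpoints

namespace BEVDGraph

variable {m n q : ℕ} {Sets : Fin m → Finset (Fin n)}

/-- The root, all set-vertices, and all copies of the elements of `D`. -/
def coveredVertices (m q : ℕ) (D : Finset (Fin n)) : Finset (Unit ⊕ (Fin m ⊕ Fin n × Fin q)) :=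
  Finset.univ.disjSum (Finset.univ.disjSum (D ×ˢ Finset.univ))

theorem card_coveredVertices (D : Finset (Fin n)) :
    (coveredVertices m q D).card = m + 1 + q * D.card := by
  simp only [coveredVertices, Finset.card_disjSum, Finset.card_product, Finset.card_univ,
    Fintype.card_unit, Fintype.card_fin]
  ring

theorem mem_coveredVertices {D : Finset (Fin n)} {u : Unit ⊕ (Fin m ⊕ Fin n × Fin q)} :
    u ∈ coveredVertices m q D ↔ ∀ x : Fin n × Fin q, u = .inr (.inr x) → x.1 ∈ D := by
  rcases u with _ | _ | x <;> simp [coveredVertices]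

def rootEdges (n q : ℕ) (K : Finset (Fin m)) : Set (Sym2 (Unit ⊕ (Fin m ⊕ Fin n × Fin q))) :=
  (fun i => s(.inl (), .inr (.inl i))) '' K

theorem rootEdges_subset_edgeSet (K : Finset (Fin m)) :
    rootEdges n q K ⊆ (BEVDGraph m n q Sets).edgeSet := by
  rintro _ ⟨i, -, rfl⟩
  simp [BEVDGraph]

theorem ncard_rootEdges_le (K : Finset (Fin m)) : (rootEdges n q K).ncard ≤ K.card :=
  (Set.ncard_image_le (Finset.finite_toSet K)).trans (Set.ncard_coe_finset K).le

theorem coveredVertices_subset_closedNbhd_rootEdges {K : Finset (Fin m)} (hK : K.Nonempty) :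
    ↑(coveredVertices m q (K.biUnion Sets)) ⊆
      closedNbhd (BEVDGraph m n q Sets) (endpoints (rootEdges n q K)) := by
  obtain ⟨i₀, hi₀⟩ := hK
  have hroot : .inl () ∈ endpoints (rootEdges n q K) := ⟨_, ⟨i₀, hi₀, rfl⟩, Sym2.mem_mk_left _ _⟩
  rintro (_ | i | x) hu
  · exact ⟨_, hroot, .inl rfl⟩
  · exact ⟨_, hroot, .inr trivial⟩
  · obtain ⟨i, hi, hxi⟩ := Finset.mem_biUnion.1 (mem_coveredVertices.1 hu x rfl)
    exact ⟨.inr (.inl i), ⟨_, ⟨i, hi, rfl⟩, Sym2.mem_mk_right _ _⟩, .inr hxi⟩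

noncomputable def touchedSets (E' : Set (Sym2 (Unit ⊕ (Fin m ⊕ Fin n × Fin q)))) :
    Finset (Fin m) :=
  (Set.toFinite {i | .inr (.inl i) ∈ endpoints E'}).toFinset

theorem card_touchedSets_le {E' : Set (Sym2 (Unit ⊕ (Fin m ⊕ Fin n × Fin q)))}
    (hE : E' ⊆ (BEVDGraph m n q Sets).edgeSet) : (touchedSets E').card ≤ E'.ncard := by
  rw [touchedSets, ← Set.ncard_eq_toFinset_card]
  exact ncard_setOf_mem_endpoints_le (Sum.inr_injective.comp Sum.inl_injective)
    (fun _ _ h => h) hE (Set.toFinite E')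

theorem closedNbhd_subset_coveredVertices {E' : Set (Sym2 (Unit ⊕ (Fin m ⊕ Fin n × Fin q)))}
    (hE : E' ⊆ (BEVDGraph m n q Sets).edgeSet) :
    closedNbhd (BEVDGraph m n q Sets) (endpoints E') ⊆
      ↑(coveredVertices m q ((touchedSets E').biUnion Sets)) := by
  intro u hu
  rw [Finset.mem_coe, mem_coveredVertices]
  rintro x rfl
  obtain ⟨_ | i | y, hv, hadj⟩ := (mem_closedNbhd_endpoints_iff hE).1 hu
  · exact hadj.elim
  · exact Finset.mem_biUnion.2 ⟨i, by simpa [touchedSets] using hv, hadj⟩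
  · exact hadj.elim

end BEVDGraph

open BEVDGraph

theorem stmt_17_general (m n q k lam mu : ℕ) (hq : 1 ≤ q)
    (hl : 1 ≤ lam) (Sets : Fin m → Finset (Fin n)) :
    ((∃ K : Finset (Fin m), K.card ≤ k ∧ lam ≤ (K.biUnion Sets).card) →
      ∃ E' ⊆ (BEVDGraph m n q Sets).edgeSet, E'.ncard ≤ k ∧
        m + 1 + q * lam ≤ (closedNbhd (BEVDGraph m n q Sets) (endpoints E')).ncard) ∧
    ((∀ K : Finset (Fin m), K.card ≤ k → (K.biUnion Sets).card < mu) →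
      ∀ E' ⊆ (BEVDGraph m n q Sets).edgeSet, E'.ncard ≤ k →
        (closedNbhd (BEVDGraph m n q Sets) (endpoints E')).ncard < m + 1 + q * mu) := by
  constructor
  · rintro ⟨K, hKk, hKlam⟩
    have hcover : 0 < (K.biUnion Sets).card := by omega
    obtain ⟨i, hi, -⟩ := Finset.biUnion_nonempty.1 (Finset.card_pos.1 hcover)
    have hK : K.Nonempty := ⟨i, hi⟩
    refine ⟨rootEdges n q K, rootEdges_subset_edgeSet K, (ncard_rootEdges_le K).trans hKk, ?_⟩
    calc m + 1 + q * lam ≤ (coveredVertices m q (K.biUnion Sets)).card := by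
          rw [card_coveredVertices]; gcongr
      _ ≤ _ := by
          rw [← Set.ncard_coe_finset]
          exact Set.ncard_le_ncard (coveredVertices_subset_closedNbhd_rootEdges hK)
  · intro hcover E' hE hE'k
    have hcard := hcover _ ((card_touchedSets_le hE).trans hE'k)
    calc (closedNbhd (BEVDGraph m n q Sets) (endpoints E')).ncard
        ≤ (coveredVertices m q ((touchedSets E').biUnion Sets)).card := by
          rw [← Set.ncard_coe_finset]
          exact Set.ncard_le_ncard (closedNbhd_subset_coveredVertices hE)
      _ < m + 1 + q * mu := by
          rw [card_coveredVertices]; gcongr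

/-- BEVD gap reduction: if some `k` sets cover at least `λ` elements, then at most `k`
edges dominate at least `m + 1 + qλ` vertices; conversely, if every `k` sets cover
fewer than `μ` elements, then every set of at most `k` edges dominates fewer than
`m + 1 + qμ` vertices. -/
theorem stmt_17 (m n q k lam mu : ℕ) (hm : 1 ≤ m) (hq : 1 ≤ q) (hk : 1 ≤ k)
    (hl : 1 ≤ lam) (Sets : Fin m → Finset (Fin n)) :
    ((∃ K : Finset (Fin m), K.card ≤ k ∧ lam ≤ (K.biUnion Sets).card) →
      ∃ E' ⊆ (BEVDGraph m n q Sets).edgeSet, E'.ncard ≤ k ∧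
        m + 1 + q * lam ≤ (closedNbhd (BEVDGraph m n q Sets) (endpoints E')).ncard) ∧
    ((∀ K : Finset (Fin m), K.card ≤ k → (K.biUnion Sets).card < mu) →
      ∀ E' ⊆ (BEVDGraph m n q Sets).edgeSet, E'.ncard ≤ k →
        (closedNbhd (BEVDGraph m n q Sets) (endpoints E')).ncard < m + 1 + q * mu) :=
  stmt_17_general m n q k lam mu hq hl Sets
end
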